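/- Let (b_p) be a sequence of integers indexed by the primes satisfying condition (A), let G be the gcd of {b_p(b_p − 1) : p prime}, and let k be an odd integer with 1 ≤ k ≤ G/2 that is divisible by every condition-(B) prime for (b_p); set c_p = k·b_p(b_p − 1)/G for each prime p. Then: (i) the set of condition-(B) primes for (b_p) is finite, and each such prime divides b₂(b₂ − 1); (ii) each c_p is an integer and the family S((b_p), k) given by ψ_p(x) = b_p x + c_p x² is a filtered λ-ring structure on ℤ[x]/(x³); (iii) two such structures S((b_p), k) and S((b'_p), k') are isomorphic if and only if b_p = b'_p for all primes p and k = k'; (iv) no structure S((b_p), k) is isomorphic to any structure S((c_p)) of the form ψ_p(x) = c_p x² (with c₂ odd and p ∣ c_p for p > 2). -/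

import Mathlib

open Polynomial

noncomputable section

/-- The truncated polynomial ring `ℤ[x]/(xⁿ)`. -/
abbrev TP (n : ℕ) : Type := Polynomial ℤ ⧸ Ideal.span {(X : Polynomial ℤ) ^ n}

/-- The class of `x` in `ℤ[x]/(xⁿ)`. -/
def xx (n : ℕ) : TP n := Ideal.Quotient.mk _ (X : Polynomial ℤ)

/-- A filtered λ-ring structure on `ℤ[x]/(xⁿ)`, presented (via Wilkerson's theorem) as a
family of Adams operations `ψ p`, indexed by the primes `p`: each `ψ p` is a ring
endomorphism preserving the filtration ideal `(x)`, they pairwise commute, and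
`ψ p r ≡ r ^ p (mod p)`. -/
structure AdamsFamily (n : ℕ) : Type where
  ψ : Nat.Primes → (TP n →+* TP n)
  maps_ideal : ∀ (p : Nat.Primes), ∀ a ∈ Ideal.span {xx n}, ψ p a ∈ Ideal.span {xx n}
  comm : ∀ p q : Nat.Primes, (ψ p).comp (ψ q) = (ψ q).comp (ψ p)
  frob : ∀ (p : Nat.Primes) (a : TP n),
    ψ p a - a ^ (p : ℕ) ∈ Ideal.span {((p : ℕ) : TP n)}

/-- Isomorphism of filtered λ-ring structures on `ℤ[x]/(xⁿ)`: a filtration-preserving ring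
automorphism intertwining the Adams operations. -/
def AdamsIso {n : ℕ} (R S : AdamsFamily n) : Prop :=
  ∃ σ : TP n ≃+* TP n,
    (Ideal.span {xx n}).map σ.toRingHom = Ideal.span {xx n} ∧
    ∀ p : Nat.Primes, σ.toRingHom.comp (R.ψ p) = (S.ψ p).comp σ.toRingHom

/-- The prime 2 as an element of `Nat.Primes`. -/
def P2 : Nat.Primes := ⟨2, Nat.prime_two⟩

/-- The prime 3 as an element of `Nat.Primes`. -/
def P3 : Nat.Primes := ⟨3, Nat.prime_three⟩

/-- Condition (A) for a sequence of integers indexed by the primes. -/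
def CondA (b : Nat.Primes → ℤ) : Prop :=
  b P2 ≠ 0 ∧ (∀ p : Nat.Primes, ((p : ℕ) : ℤ) ∣ b p) ∧
    ∀ p : Nat.Primes, 2 < (p : ℕ) →
      (2 : ℤ) ^ padicValInt 2 (b P2) ∣ b p * (b p - 1)

/-- `p` is a condition-(B) prime for the sequence `b`. -/
def CondBPrime (b : Nat.Primes → ℤ) (p : Nat.Primes) : Prop :=
  2 < (p : ℕ) ∧ b p ≠ 0 ∧
    padicValInt (p : ℕ) (b p) =
      sInf {m : ℕ | ∃ q : Nat.Primes, b q ≠ 0 ∧ m = padicValInt (p : ℕ) (b q * (b q - 1))}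

/-
Every endomorphism of `ℤ[x]/(x³)` preserving `(x)` is a substitution `x ↦ βx + γx²`, and these
compose as substitutions do, so Adams operations and isomorphisms turn into identities between
coefficients. The congruence `ψ_p(r) ≡ r^p (mod p)` need only be checked at `r = x`: both sides are
ring maps into a ring of characteristic `p`. An isomorphism is `x ↦ ux + vx²` with `u = ±1`; it
forces `b = b'` and `k ≡ ±k' (mod G)`, hence `k = k'` since both lie in `[1, G/2]`.
The `p`-adic valuation of `G` is the least one among the `b_q(b_q - 1)`. For `p = 2` condition (A)
makes it that of `b₂(b₂ - 1)`, so `c₂` is odd; for odd `p`, either `p` divides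
`b_p(b_p - 1)/G` or `p` is a condition-(B) prime, and then `p ∣ k`.
-/
namespace TP

theorem ringHom_ext {n : ℕ} {R : Type*} [Ring R] {f g : TP n →+* R} (h : f (xx n) = g (xx n)) :
    f = g :=
  Ideal.Quotient.ringHom_ext (Polynomial.ringHom_ext' (Subsingleton.elim _ _) h)

theorem natCast_mem_nonunits {n : ℕ} (hn : n ≠ 0) {p : ℕ} (hp : p ≠ 1) :
    (p : TP n) ∈ nonunits (TP n) := by
  let ev : TP n →+* ℤ := Ideal.Quotient.lift _ constantCoeff fun a ha => by
    obtain ⟨c, rfl⟩ := Ideal.mem_span_singleton.mp ha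
    simp [Ne.symm hn]
  intro hu
  have : IsUnit (p : ℤ) := by simpa using hu.map ev
  exact hp (by exact_mod_cast Int.isUnit_iff_natAbs_eq.mp this)

theorem sub_pow_mem_of_xx {n : ℕ} (hn : n ≠ 0) {p : ℕ} [Fact p.Prime] {f : TP n →+* TP n}
    (hx : f (xx n) - xx n ^ p ∈ Ideal.span {(p : TP n)}) (a : TP n) :
    f a - a ^ p ∈ Ideal.span {(p : TP n)} := by
  have := CharP.quotient (TP n) p (natCast_mem_nonunits hn (Fact.out : p.Prime).ne_one)
  let Q := TP n ⧸ Ideal.span {(p : TP n)}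
  have hfrob : (Ideal.Quotient.mk _).comp f = (frobenius Q p).comp (Ideal.Quotient.mk _) :=
    ringHom_ext (by simpa [frobenius_def] using Ideal.Quotient.eq.mpr hx)
  simpa [frobenius_def] using Ideal.Quotient.eq.mp (RingHom.congr_fun hfrob a)

theorem xx_pow_three : xx 3 ^ 3 = 0 :=
  Ideal.Quotient.eq_zero_iff_mem.mpr (Ideal.subset_span rfl)

theorem xx_pow_eq_zero {m : ℕ} (hm : 3 ≤ m) : xx 3 ^ m = 0 :=
  pow_eq_zero_of_le hm xx_pow_three

theorem mk_X (n : ℕ) : Ideal.Quotient.mk (Ideal.span {(X : ℤ[X]) ^ n}) X = xx n := rfl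

theorem exists_eq_of_mem_span_xx {t : TP 3} (ht : t ∈ Ideal.span {xx 3}) :
    ∃ a₁ a₂ : ℤ, t = a₁ * xx 3 + a₂ * xx 3 ^ 2 := by
  obtain ⟨s, rfl⟩ := Ideal.mem_span_singleton'.mp ht
  obtain ⟨g, rfl⟩ := Ideal.Quotient.mk_surjective s
  refine ⟨g.coeff 0, g.divX.coeff 0, ?_⟩
  conv_lhs => rw [← divX_mul_X_add g, ← divX_mul_X_add g.divX]
  simp only [map_add, map_mul, mk_X, eq_intCast, map_intCast]
  linear_combination (Ideal.Quotient.mk _ g.divX.divX) * xx_pow_three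

theorem eq_of_intCast_mul_xx_add_eq {a₁ a₂ b₁ b₂ : ℤ}
    (h : (a₁ : TP 3) * xx 3 + a₂ * xx 3 ^ 2 = b₁ * xx 3 + b₂ * xx 3 ^ 2) :
    a₁ = b₁ ∧ a₂ = b₂ := by
  have hmem : C (a₁ - b₁) * X + C (a₂ - b₂) * X ^ 2 ∈ Ideal.span {(X : ℤ[X]) ^ 3} := by
    rw [← Ideal.Quotient.eq_zero_iff_mem]
    simp only [map_add, map_mul, map_pow, mk_X, eq_intCast, map_sub, map_intCast]
    linear_combination h
  rw [Ideal.mem_span_singleton, X_pow_dvd_iff] at hmem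
  have h1 := hmem 1 (by norm_num)
  have h2 := hmem 2 (by norm_num)
  simp only [coeff_add, coeff_C_mul, coeff_X, coeff_X_pow] at h1 h2
  norm_num at h1 h2
  omega

def endo (β γ : ℤ) : TP 3 →+* TP 3 :=
  Ideal.Quotient.lift _ (eval₂RingHom (Int.castRingHom _) (β * xx 3 + γ * xx 3 ^ 2)) fun a ha => by
    obtain ⟨c, rfl⟩ := Ideal.mem_span_singleton'.mp ha
    simp only [coe_eval₂RingHom, eval₂_mul, eval₂_X_pow]
    linear_combination (eval₂ (Int.castRingHom _) (β * xx 3 + γ * xx 3 ^ 2) c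
      * (β + γ * xx 3) ^ 3) * xx_pow_three

@[simp] theorem endo_xx (β γ : ℤ) : endo β γ (xx 3) = β * xx 3 + γ * xx 3 ^ 2 :=
  (Ideal.Quotient.lift_mk _ _ _).trans (eval₂_X _ _)

theorem eq_endo_of_apply_xx {f : TP 3 →+* TP 3} {β γ : ℤ}
    (h : f (xx 3) = β * xx 3 + γ * xx 3 ^ 2) : f = endo β γ :=
  ringHom_ext (by rw [h, endo_xx])

theorem exists_eq_endo {f : TP 3 →+* TP 3} (h : f (xx 3) ∈ Ideal.span {xx 3}) :
    ∃ β γ : ℤ, f = endo β γ := by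
  obtain ⟨β, γ, hf⟩ := exists_eq_of_mem_span_xx h
  exact ⟨β, γ, eq_endo_of_apply_xx hf⟩

theorem endo_comp_endo (β γ β' γ' : ℤ) :
    (endo β γ).comp (endo β' γ') = endo (β * β') (β' * γ + γ' * β ^ 2) := by
  refine ringHom_ext ?_
  simp only [RingHom.comp_apply, endo_xx, map_add, map_mul, map_pow, map_intCast]
  push_cast
  linear_combination (γ' * (2 * β * γ + γ ^ 2 * xx 3) : TP 3) * xx_pow_three

theorem endo_inj {β γ β' γ' : ℤ} : endo β γ = endo β' γ' ↔ β = β' ∧ γ = γ' := by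
  refine ⟨fun h => eq_of_intCast_mul_xx_add_eq ?_, fun ⟨hβ, hγ⟩ => hβ ▸ hγ ▸ rfl⟩
  rw [← endo_xx, ← endo_xx, h]

theorem endo_one_zero : endo 1 0 = RingHom.id _ :=
  ringHom_ext (by simp)

theorem endo_mem_span_xx (β γ : ℤ) {a : TP 3} (ha : a ∈ Ideal.span {xx 3}) :
    endo β γ a ∈ Ideal.span {xx 3} := by
  obtain ⟨s, rfl⟩ := Ideal.mem_span_singleton'.mp ha
  rw [map_mul, endo_xx]
  exact Ideal.mem_span_singleton'.mpr ⟨endo β γ s * (β + γ * xx 3), by ring⟩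

theorem exists_endo_eq_of_map_span_eq {σ : TP 3 ≃+* TP 3}
    (hσ : (Ideal.span {xx 3}).map σ.toRingHom = Ideal.span {xx 3}) :
    ∃ u v : ℤ, σ.toRingHom = endo u v ∧ IsUnit u := by
  have hx : xx 3 ∈ Ideal.span {xx 3} := Ideal.mem_span_singleton_self _
  obtain ⟨u, v, hσuv⟩ := exists_eq_endo (f := σ.toRingHom) (hσ ▸ Ideal.mem_map_of_mem _ hx)
  obtain ⟨y, hy, hσy⟩ := (Ideal.mem_map_of_equiv σ _).mp (hσ.symm ▸ hx)
  obtain ⟨u', v', hσuv'⟩ := exists_eq_endo (f := σ.symm.toRingHom)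
    (by simpa [← hσy] using hy)
  have hid : (endo u v).comp (endo u' v') = endo 1 0 := by
    rw [← hσuv, ← hσuv', endo_one_zero, RingEquiv.toRingHom_comp_symm_toRingHom]
  rw [endo_comp_endo, endo_inj] at hid
  exact ⟨u, v, hσuv, IsUnit.of_mul_eq_one _ hid.1⟩

theorem intCast_mul_xx_add_mem_span {m a₁ a₂ : ℤ} (h₁ : m ∣ a₁) (h₂ : m ∣ a₂) :
    (a₁ : TP 3) * xx 3 + a₂ * xx 3 ^ 2 ∈ Ideal.span {(m : TP 3)} := by
  obtain ⟨s₁, rfl⟩ := h₁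
  obtain ⟨s₂, rfl⟩ := h₂
  exact Ideal.mem_span_singleton.mpr ⟨s₁ * xx 3 + s₂ * xx 3 ^ 2, by push_cast; ring⟩

theorem endo_sub_pow_mem {p : ℕ} [Fact p.Prime] {β γ : ℤ} (hβ : (p : ℤ) ∣ β)
    (hγ : (p : ℤ) ∣ γ - if p = 2 then 1 else 0) (a : TP 3) :
    endo β γ a - a ^ p ∈ Ideal.span {(p : TP 3)} := by
  refine sub_pow_mem_of_xx three_ne_zero ?_ a
  have hxp : xx 3 ^ p = ((if p = 2 then 1 else 0 : ℤ) : TP 3) * xx 3 ^ 2 := by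
    split_ifs with hp
    · simp [hp]
    · have := (Fact.out : p.Prime).two_le
      rw [xx_pow_eq_zero (by omega), Int.cast_zero, zero_mul]
  rw [endo_xx, hxp, add_sub_assoc, ← sub_mul, ← Int.cast_sub, ← Int.cast_natCast]
  exact intCast_mul_xx_add_mem_span hβ hγ

theorem endo_comm_of_mul_eq {β γ β' γ' : ℤ} (h : γ * (β' * (β' - 1)) = γ' * (β * (β - 1))) :
    (endo β γ).comp (endo β' γ') = (endo β' γ').comp (endo β γ) := by
  rw [endo_comp_endo, endo_comp_endo, endo_inj]
  constructor
  · ring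
  · linear_combination -h

end TP

open TP

section SpanRange
variable {R ι : Type*} [CommSemiring R] {f : ι → R} {G : R}

theorem dvd_of_span_range_eq (hG : Ideal.span (Set.range f) = Ideal.span {G}) (i : ι) : G ∣ f i :=
  Ideal.mem_span_singleton.mp (hG ▸ Ideal.subset_span ⟨i, rfl⟩)

theorem dvd_of_span_range_eq_of_forall_dvd (hG : Ideal.span (Set.range f) = Ideal.span {G})
    {d : R} (hd : ∀ i, d ∣ f i) : d ∣ G := by
  have hGmem : G ∈ Ideal.span (Set.range f) := hG ▸ Ideal.mem_span_singleton_self G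
  refine Ideal.mem_span_singleton.mp (Ideal.span_le.mpr ?_ hGmem)
  rintro _ ⟨i, rfl⟩
  exact Ideal.mem_span_singleton.mpr (hd i)

end SpanRange

section Valuation
variable {p : ℕ} [Fact p.Prime]

theorem not_dvd_sub_one_of_dvd {b : ℤ} (h : (p : ℤ) ∣ b) : ¬ (p : ℤ) ∣ b - 1 := fun h' =>
  (Fact.out : p.Prime).not_dvd_one (Int.natCast_dvd_natCast.mp (by simpa using dvd_sub h h'))

theorem sub_one_ne_zero_of_dvd {b : ℤ} (h : (p : ℤ) ∣ b) : b - 1 ≠ 0 := fun h' =>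
  not_dvd_sub_one_of_dvd h (h' ▸ dvd_zero _)

theorem mul_sub_one_ne_zero_of_dvd {b : ℤ} (hb : b ≠ 0) (h : (p : ℤ) ∣ b) : b * (b - 1) ≠ 0 :=
  mul_ne_zero hb (sub_one_ne_zero_of_dvd h)

theorem le_padicValInt_of_pow_dvd {n : ℕ} {a : ℤ} (ha : a ≠ 0) (h : (p : ℤ) ^ n ∣ a) :
    n ≤ padicValInt p a :=
  ((padicValInt_dvd_iff n a).mp h).resolve_left ha

theorem padicValInt_le_of_dvd {a c : ℤ} (hc : c ≠ 0) (h : a ∣ c) :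
    padicValInt p a ≤ padicValInt p c :=
  le_padicValInt_of_pow_dvd hc ((padicValInt_dvd a).trans h)

theorem padicValInt_mul_sub_one {b : ℤ} (hb : b ≠ 0) (h : (p : ℤ) ∣ b) :
    padicValInt p (b * (b - 1)) = padicValInt p b := by
  rw [padicValInt.mul hb (sub_one_ne_zero_of_dvd h),
    padicValInt.eq_zero_of_not_dvd (not_dvd_sub_one_of_dvd h), add_zero]

theorem padicValInt_eq_sInf_of_span_eq {ι : Type*} {f : ι → ℤ} {G : ℤ}
    (hG : Ideal.span (Set.range f) = Ideal.span {G}) (hG0 : G ≠ 0) :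
    padicValInt p G = sInf {m : ℕ | ∃ i, f i ≠ 0 ∧ m = padicValInt p (f i)} := by
  have hne : {m : ℕ | ∃ i, f i ≠ 0 ∧ m = padicValInt p (f i)}.Nonempty := by
    by_contra! hempty
    refine hG0 (zero_dvd_iff.mp (dvd_of_span_range_eq_of_forall_dvd hG fun i => ?_))
    by_contra hi
    exact hempty.subset ⟨i, by simpa using hi, rfl⟩
  refine le_antisymm (le_csInf hne ?_) ?_
  · rintro _ ⟨i, hi, rfl⟩
    exact padicValInt_le_of_dvd hi (dvd_of_span_range_eq hG i)
  · refine le_padicValInt_of_pow_dvd hG0 (dvd_of_span_range_eq_of_forall_dvd hG fun i => ?_)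
    by_cases hi : f i = 0
    · rw [hi]
      exact dvd_zero _
    · exact (padicValInt_dvd_iff _ _).mpr (Or.inr (Nat.sInf_le ⟨i, hi, rfl⟩))

end Valuation

namespace CondA
variable {b : Nat.Primes → ℤ}

theorem mul_sub_one_ne_zero_iff (hA : CondA b) (q : Nat.Primes) :
    b q * (b q - 1) ≠ 0 ↔ b q ≠ 0 :=
  have : Fact (q : ℕ).Prime := ⟨q.2⟩
  ⟨left_ne_zero_of_mul, fun hq => mul_sub_one_ne_zero_of_dvd hq (hA.2.1 q)⟩

theorem mul_sub_one_ne_zero_two (hA : CondA b) : b P2 * (b P2 - 1) ≠ 0 :=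
  (hA.mul_sub_one_ne_zero_iff P2).mpr hA.1

theorem padicValInt_eq_sInf (hA : CondA b) {G : ℤ}
    (hG : Ideal.span (Set.range fun p : Nat.Primes => b p * (b p - 1)) = Ideal.span {G})
    (hG0 : G ≠ 0) (p : ℕ) [Fact p.Prime] :
    padicValInt p G = sInf {m : ℕ | ∃ q, b q ≠ 0 ∧ m = padicValInt p (b q * (b q - 1))} := by
  simp_rw [← hA.mul_sub_one_ne_zero_iff]
  exact padicValInt_eq_sInf_of_span_eq hG hG0

theorem two_pow_dvd (hA : CondA b) (q : Nat.Primes) :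
    2 ^ padicValInt 2 (b P2) ∣ b q * (b q - 1) := by
  rcases q.2.two_le.eq_or_lt with hq | hq
  · obtain rfl : P2 = q := Subtype.ext hq
    exact (padicValInt_dvd (b P2)).mul_right _
  · exact hA.2.2 q hq

theorem dvd_of_condBPrime (hA : CondA b) {p : Nat.Primes} (hp : CondBPrime b p) :
    ((p : ℕ) : ℤ) ∣ b P2 * (b P2 - 1) := by
  have : Fact (p : ℕ).Prime := ⟨p.2⟩
  obtain ⟨-, hbp, hval⟩ := hp
  suffices h : 1 ≤ padicValInt p (b P2 * (b P2 - 1)) by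
    simpa using (padicValInt_dvd_iff 1 _).mpr (Or.inr h)
  calc 1 ≤ padicValInt p (b p) := le_padicValInt_of_pow_dvd hbp (by simpa using hA.2.1 p)
    _ = _ := hval
    _ ≤ _ := Nat.sInf_le ⟨P2, hA.1, rfl⟩

theorem finite_condBPrime (hA : CondA b) : {p : Nat.Primes | CondBPrime b p}.Finite := by
  refine ((Set.finite_Iic (b P2 * (b P2 - 1)).natAbs).preimage Subtype.coe_injective.injOn).subset
    fun p hp => ?_
  exact Nat.le_of_dvd (Int.natAbs_pos.mpr hA.mul_sub_one_ne_zero_two)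
    (Int.natCast_dvd.mp (hA.dvd_of_condBPrime hp))

end CondA

/-- The coefficient `c_p` of `x²` in `ψ_p`; the division is exact, see `quadCoeff_eq_mul`. -/
def quadCoeff (b : Nat.Primes → ℤ) (k G : ℤ) (p : Nat.Primes) : ℤ := k * (b p * (b p - 1)) / G

section QuadCoeff
variable {b : Nat.Primes → ℤ} {k G : ℤ}

theorem quadCoeff_eq_mul
    (hG : Ideal.span (Set.range fun p : Nat.Primes => b p * (b p - 1)) = Ideal.span {G})
    (p : Nat.Primes) : quadCoeff b k G p = k * (b p * (b p - 1) / G) :=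
  Int.mul_ediv_assoc k (dvd_of_span_range_eq hG p)

theorem quadCoeff_mul_comm
    (hG : Ideal.span (Set.range fun p : Nat.Primes => b p * (b p - 1)) = Ideal.span {G})
    (p q : Nat.Primes) :
    quadCoeff b k G p * (b q * (b q - 1)) = quadCoeff b k G q * (b p * (b p - 1)) := by
  have hp := Int.mul_ediv_cancel' (dvd_of_span_range_eq hG p)
  have hq := Int.mul_ediv_cancel' (dvd_of_span_range_eq hG q)
  rw [quadCoeff_eq_mul hG, quadCoeff_eq_mul hG]
  linear_combination (k * (b q * (b q - 1) / G)) * hp - (k * (b p * (b p - 1) / G)) * hq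

theorem odd_quadCoeff_two (hA : CondA b)
    (hG : Ideal.span (Set.range fun p : Nat.Primes => b p * (b p - 1)) = Ideal.span {G})
    (hk : Odd k) : Odd (quadCoeff b k G P2) := by
  rw [quadCoeff_eq_mul hG]
  refine hk.mul (Int.not_even_iff_odd.mp fun ⟨t, ht⟩ => ?_)
  obtain ⟨s, hs⟩ := dvd_of_span_range_eq_of_forall_dvd hG hA.two_pow_dvd
  have hdvd : 2 ^ (padicValInt 2 (b P2) + 1) ∣ b P2 * (b P2 - 1) :=
    ⟨s * t, by rw [← Int.mul_ediv_cancel' (dvd_of_span_range_eq hG P2), ht, hs]; ring⟩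
  have := le_padicValInt_of_pow_dvd (p := 2) hA.mul_sub_one_ne_zero_two hdvd
  rw [padicValInt_mul_sub_one (p := 2) hA.1 (hA.2.1 P2)] at this
  omega

theorem dvd_quadCoeff (hA : CondA b)
    (hG : Ideal.span (Set.range fun p : Nat.Primes => b p * (b p - 1)) = Ideal.span {G})
    (hk : ∀ p : Nat.Primes, CondBPrime b p → ((p : ℕ) : ℤ) ∣ k)
    {p : Nat.Primes} (hp : 2 < (p : ℕ)) : ((p : ℕ) : ℤ) ∣ quadCoeff b k G p := by
  have : Fact (p : ℕ).Prime := ⟨p.2⟩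
  by_cases hbp : b p = 0
  · simp [quadCoeff, hbp]
  rw [quadCoeff_eq_mul hG]
  set m := b p * (b p - 1) / G
  by_cases hm : ((p : ℕ) : ℤ) ∣ m
  · exact hm.mul_left k
  have hGm : G * m = b p * (b p - 1) := Int.mul_ediv_cancel' (dvd_of_span_range_eq hG p)
  have hGm0 : G * m ≠ 0 := hGm ▸ mul_sub_one_ne_zero_of_dvd hbp (hA.2.1 p)
  have hG0 : G ≠ 0 := left_ne_zero_of_mul hGm0
  have hval : padicValInt p (b p) = padicValInt p G := by
    rw [← padicValInt_mul_sub_one hbp (hA.2.1 p), ← hGm,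
      padicValInt.mul hG0 (right_ne_zero_of_mul hGm0), padicValInt.eq_zero_of_not_dvd hm, add_zero]
  exact (hk p ⟨hp, hbp, hval.trans (hA.padicValInt_eq_sInf hG hG0 p)⟩).mul_right m

end QuadCoeff

def AdamsFamily.ofCoeffs {b : Nat.Primes → ℤ} {k G : ℤ} (hA : CondA b)
    (hG : Ideal.span (Set.range fun p : Nat.Primes => b p * (b p - 1)) = Ideal.span {G})
    (hk : Odd k) (hkB : ∀ p : Nat.Primes, CondBPrime b p → ((p : ℕ) : ℤ) ∣ k) :
    AdamsFamily 3 where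
  ψ p := endo (b p) (quadCoeff b k G p)
  maps_ideal _ _ := endo_mem_span_xx _ _
  comm p q := endo_comm_of_mul_eq (quadCoeff_mul_comm hG p q)
  frob p := by
    have : Fact (p : ℕ).Prime := ⟨p.2⟩
    refine endo_sub_pow_mem (hA.2.1 p) ?_
    split_ifs with hp
    · obtain rfl : p = P2 := Subtype.ext hp
      exact (odd_quadCoeff_two hA hG hk).sub_odd odd_one |>.two_dvd
    · have := p.2.two_le
      rw [sub_zero]
      exact dvd_quadCoeff hA hG hkB (by omega)

theorem AdamsIso.of_forall_ψ_eq {n : ℕ} {S T : AdamsFamily n} (h : ∀ p, S.ψ p = T.ψ p) :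
    AdamsIso S T :=
  ⟨RingEquiv.refl _, by simp, fun p => by simp [h p]⟩

theorem AdamsIso.exists_coeff_rel {S T : AdamsFamily 3} {β γ β' γ' : Nat.Primes → ℤ}
    (hS : ∀ p, S.ψ p (xx 3) = β p * xx 3 + γ p * xx 3 ^ 2)
    (hT : ∀ p, T.ψ p (xx 3) = β' p * xx 3 + γ' p * xx 3 ^ 2) (h : AdamsIso S T) :
    ∃ u v : ℤ, (u = 1 ∨ u = -1) ∧
      ∀ p, β p = β' p ∧ β p * v + γ p = u * γ' p + v * β p ^ 2 := by
  obtain ⟨σ, hσ, hσψ⟩ := h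
  obtain ⟨u, v, hσuv, hu⟩ := exists_endo_eq_of_map_span_eq hσ
  refine ⟨u, v, Int.isUnit_iff.mp hu, fun p => ?_⟩
  have hp := hσψ p
  rw [hσuv, eq_endo_of_apply_xx (hS p), eq_endo_of_apply_xx (hT p), endo_comp_endo,
    endo_comp_endo, endo_inj] at hp
  obtain ⟨h₁, h₂⟩ := hp
  have hβ : β p = β' p := mul_left_cancel₀ hu.ne_zero (by linarith)
  refine ⟨hβ, ?_⟩
  rwa [← hβ, Int.isUnit_sq hu, mul_one] at h₂

theorem eq_of_sub_eq_mul_of_two_mul_le {k k' G u v : ℤ} (hu : u = 1 ∨ u = -1)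
    (hk : 1 ≤ k) (hk' : 1 ≤ k') (h2k : 2 * k ≤ G) (h2k' : 2 * k' ≤ G)
    (h : k - u * k' = v * G) : k = k' := by
  rcases hu with rfl | rfl <;> rcases lt_trichotomy v 0 with hv | rfl | hv <;> nlinarith

theorem eq_of_quadCoeff_two_rel {b : Nat.Primes → ℤ} {k k' G u v : ℤ} (hA : CondA b)
    (hG : Ideal.span (Set.range fun p : Nat.Primes => b p * (b p - 1)) = Ideal.span {G})
    (hk : 1 ≤ k) (hk' : 1 ≤ k') (h2k : 2 * k ≤ G) (h2k' : 2 * k' ≤ G) (hu : u = 1 ∨ u = -1)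
    (h : b P2 * v + quadCoeff b k G P2 = u * quadCoeff b k' G P2 + v * b P2 ^ 2) : k = k' := by
  refine eq_of_sub_eq_mul_of_two_mul_le (v := v) hu hk hk' h2k h2k' ?_
  rw [quadCoeff_eq_mul hG, quadCoeff_eq_mul hG] at h
  have hm := Int.mul_ediv_cancel' (dvd_of_span_range_eq hG P2)
  have hm0 : b P2 * (b P2 - 1) / G ≠ 0 :=
    right_ne_zero_of_mul (hm ▸ hA.mul_sub_one_ne_zero_two)
  refine mul_right_cancel₀ hm0 ?_
  linear_combination h - v * hm

theorem stmt6_general (b b' : Nat.Primes → ℤ) (k k' G G' : ℤ)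
    (hA : CondA b)
    (hG : Ideal.span (Set.range fun p : Nat.Primes => b p * (b p - 1)) = Ideal.span {G})
    (hG' : Ideal.span (Set.range fun p : Nat.Primes => b' p * (b' p - 1)) = Ideal.span {G'})
    (hk1 : Odd k) (hk2 : 1 ≤ k) (hk3 : 2 * k ≤ G)
    (hk4 : ∀ p : Nat.Primes, CondBPrime b p → ((p : ℕ) : ℤ) ∣ k)
    (hk2' : 1 ≤ k') (hk3' : 2 * k' ≤ G') :
    ({p : Nat.Primes | CondBPrime b p}.Finite ∧
      ∀ p : Nat.Primes, CondBPrime b p → ((p : ℕ) : ℤ) ∣ b P2 * (b P2 - 1)) ∧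
    ((∀ p : Nat.Primes, G ∣ k * (b p * (b p - 1))) ∧
      ∃ S : AdamsFamily 3, ∀ p : Nat.Primes,
        S.ψ p (xx 3) =
          (b p : TP 3) * xx 3 + ((k * (b p * (b p - 1)) / G : ℤ) : TP 3) * xx 3 ^ 2) ∧
    (∀ S S' : AdamsFamily 3,
      (∀ p : Nat.Primes, S.ψ p (xx 3) =
          (b p : TP 3) * xx 3 + ((k * (b p * (b p - 1)) / G : ℤ) : TP 3) * xx 3 ^ 2) →
      (∀ p : Nat.Primes, S'.ψ p (xx 3) =
          (b' p : TP 3) * xx 3 + ((k' * (b' p * (b' p - 1)) / G' : ℤ) : TP 3) * xx 3 ^ 2) →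
      (AdamsIso S S' ↔ (∀ p : Nat.Primes, b p = b' p) ∧ k = k')) ∧
    (∀ (S T : AdamsFamily 3) (c : Nat.Primes → ℤ),
      (∀ p : Nat.Primes, S.ψ p (xx 3) =
          (b p : TP 3) * xx 3 + ((k * (b p * (b p - 1)) / G : ℤ) : TP 3) * xx 3 ^ 2) →
      Int.ModEq 2 (c P2) 1 → (∀ p : Nat.Primes, 2 < (p : ℕ) → ((p : ℕ) : ℤ) ∣ c p) →
      (∀ p : Nat.Primes, T.ψ p (xx 3) = (c p : TP 3) * xx 3 ^ 2) →
      ¬ AdamsIso S T) := by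
  have hGG' (hb : b' = b) : G' = G := by
    subst hb
    exact Int.eq_of_associated_of_nonneg
      (Ideal.span_singleton_eq_span_singleton.mp (hG'.symm.trans hG)) (by omega) (by omega)
  refine ⟨⟨hA.finite_condBPrime, fun p hp => hA.dvd_of_condBPrime hp⟩,
    ⟨fun p => (dvd_of_span_range_eq hG p).mul_left k,
      AdamsFamily.ofCoeffs hA hG hk1 hk4, fun p => endo_xx _ _⟩,
    fun S S' hS hS' => ⟨fun h => ?_, ?_⟩, fun S T c hS _ _ hT h => ?_⟩
  · obtain ⟨u, v, hu, hrel⟩ := h.exists_coeff_rel hS hS'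
    obtain rfl : b' = b := funext fun p => (hrel p).1.symm
    obtain rfl := hGG' rfl
    exact ⟨fun _ => rfl, eq_of_quadCoeff_two_rel hA hG hk2 hk2' hk3 hk3' hu (hrel P2).2⟩
  · rintro ⟨hb, rfl⟩
    obtain rfl : b' = b := (funext hb).symm
    obtain rfl := hGG' rfl
    exact AdamsIso.of_forall_ψ_eq fun p =>
      (eq_endo_of_apply_xx (hS p)).trans (eq_endo_of_apply_xx (hS' p)).symm
  · obtain ⟨_, _, -, hrel⟩ := h.exists_coeff_rel hS (β' := 0) (γ' := c) fun p => by simp [hT]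
    exact hA.1 (hrel P2).1

theorem stmt6 (b b' : Nat.Primes → ℤ) (k k' G G' : ℤ)
    (hA : CondA b) (hA' : CondA b')
    (hG : Ideal.span (Set.range fun p : Nat.Primes => b p * (b p - 1)) = Ideal.span {G})
    (hG0 : 0 ≤ G)
    (hG' : Ideal.span (Set.range fun p : Nat.Primes => b' p * (b' p - 1)) = Ideal.span {G'})
    (hG0' : 0 ≤ G')
    (hk1 : Odd k) (hk2 : 1 ≤ k) (hk3 : 2 * k ≤ G)
    (hk4 : ∀ p : Nat.Primes, CondBPrime b p → ((p : ℕ) : ℤ) ∣ k)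
    (hk1' : Odd k') (hk2' : 1 ≤ k') (hk3' : 2 * k' ≤ G')
    (hk4' : ∀ p : Nat.Primes, CondBPrime b' p → ((p : ℕ) : ℤ) ∣ k') :
    ({p : Nat.Primes | CondBPrime b p}.Finite ∧
      ∀ p : Nat.Primes, CondBPrime b p → ((p : ℕ) : ℤ) ∣ b P2 * (b P2 - 1)) ∧
    ((∀ p : Nat.Primes, G ∣ k * (b p * (b p - 1))) ∧
      ∃ S : AdamsFamily 3, ∀ p : Nat.Primes,
        S.ψ p (xx 3) =
          (b p : TP 3) * xx 3 + ((k * (b p * (b p - 1)) / G : ℤ) : TP 3) * xx 3 ^ 2) ∧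
    (∀ S S' : AdamsFamily 3,
      (∀ p : Nat.Primes, S.ψ p (xx 3) =
          (b p : TP 3) * xx 3 + ((k * (b p * (b p - 1)) / G : ℤ) : TP 3) * xx 3 ^ 2) →
      (∀ p : Nat.Primes, S'.ψ p (xx 3) =
          (b' p : TP 3) * xx 3 + ((k' * (b' p * (b' p - 1)) / G' : ℤ) : TP 3) * xx 3 ^ 2) →
      (AdamsIso S S' ↔ (∀ p : Nat.Primes, b p = b' p) ∧ k = k')) ∧
    (∀ (S T : AdamsFamily 3) (c : Nat.Primes → ℤ),
      (∀ p : Nat.Primes, S.ψ p (xx 3) =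
          (b p : TP 3) * xx 3 + ((k * (b p * (b p - 1)) / G : ℤ) : TP 3) * xx 3 ^ 2) →
      Int.ModEq 2 (c P2) 1 → (∀ p : Nat.Primes, 2 < (p : ℕ) → ((p : ℕ) : ℤ) ∣ c p) →
      (∀ p : Nat.Primes, T.ψ p (xx 3) = (c p : TP 3) * xx 3 ^ 2) →
      ¬ AdamsIso S T) :=
  stmt6_general b b' k k' G G' hA hG hG' hk1 hk2 hk3 hk4 hk2' hk3'
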